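/- arXiv:1906.10749 — 5 statements merged into one kernel-verified Lean document; each statement's English description precedes it below -/
import Mathlib

section
/- The seven points (λ^{2k}, λ^{3k}) for k = 0,…,6, where λ = exp(2πi/7), are pairwise distinct, all lie on the curve y² = x³, and no nonzero complex conic (polynomial of degree ≤ 2 in x, y) vanishes at all seven of them. -/
/-- The vertex `(λ^{2k}, λ^{3k})`, with `λ = exp(2πi/7)`. -/
noncomputable def heptagonVertex (k : ℕ) : ℂ × ℂ :=
  (Complex.exp (2 * Real.pi * Complex.I / 7) ^ (2 * k),
   Complex.exp (2 * Real.pi * Complex.I / 7) ^ (3 * k))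

private lemma hept_prim : IsPrimitiveRoot (Complex.exp (2 * Real.pi * Complex.I / 7)) 7 := by
  simpa using Complex.isPrimitiveRoot_exp 7 (by norm_num)

private lemma hept_pow_eq {a b : ℕ} :
    Complex.exp (2 * Real.pi * Complex.I / 7) ^ a =
      Complex.exp (2 * Real.pi * Complex.I / 7) ^ b ↔ a ≡ b [MOD 7] := by
  have h7 : Complex.exp (2 * Real.pi * Complex.I / 7) ^ 7 = 1 := hept_prim.pow_eq_one
  have key : ∀ n : ℕ, Complex.exp (2 * Real.pi * Complex.I / 7) ^ n =
      Complex.exp (2 * Real.pi * Complex.I / 7) ^ (n % 7) := by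
    intro n
    conv_lhs => rw [← Nat.div_add_mod n 7]
    rw [pow_add, pow_mul, h7, one_pow, one_mul]
  constructor
  · intro h
    rw [key a, key b] at h
    exact hept_prim.pow_inj (Nat.mod_lt _ (by norm_num)) (Nat.mod_lt _ (by norm_num)) h
  · intro h
    rw [key a, key b, h]

/-- The seven points `(λ^{2k}, λ^{3k})`, `λ = exp(2πi/7)`, are pairwise distinct, lie on
`y² = x³`, and no nonzero conic vanishes at all seven of them. -/
theorem heptagon_not_inscribed_in_conic :
    (∀ k l : Fin 7, heptagonVertex k = heptagonVertex l → k = l) ∧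
    (∀ k : Fin 7, (heptagonVertex k).2 ^ 2 = (heptagonVertex k).1 ^ 3) ∧
    (∀ Q : MvPolynomial (Fin 2) ℂ, Q ≠ 0 → Q.totalDegree ≤ 2 →
      ∃ k : Fin 7, MvPolynomial.eval ![(heptagonVertex k).1, (heptagonVertex k).2] Q ≠ 0) := by
  set lam := Complex.exp (2 * Real.pi * Complex.I / 7) with hlam
  refine ⟨?_, ?_, ?_⟩
  · intro k l h
    have h1 : lam ^ (2 * (k : ℕ)) = lam ^ (2 * (l : ℕ)) := congrArg Prod.fst h
    have h2 := hept_pow_eq.mp h1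
    have hk := k.isLt
    have hl := l.isLt
    unfold Nat.ModEq at h2
    exact Fin.ext (by omega)
  · intro k
    show (lam ^ (3 * (k : ℕ))) ^ 2 = (lam ^ (2 * (k : ℕ))) ^ 3
    rw [← pow_mul, ← pow_mul]
    congr 1
    ring
  · intro Q hQ hdeg
    by_contra hcon
    push_neg at hcon
    -- exponent map
    set e : (Fin 2 →₀ ℕ) → ℕ := fun m => 2 * m 0 + 3 * m 1 with he
    have hsupdeg : ∀ m ∈ Q.support, m 0 + m 1 ≤ 2 := by
      intro m hm
      have := MvPolynomial.le_totalDegree hm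
      have hsum : (m.sum fun _ n => n) = m 0 + m 1 := by
        rw [Finsupp.sum_fintype _ _ (fun _ => rfl), Fin.sum_univ_two]
      omega
    set P : Polynomial ℂ :=
      ∑ m ∈ Q.support, Polynomial.C (Q.coeff m) * Polynomial.X ^ (e m) with hP
    have hPdeg : P.natDegree ≤ 6 := by
      apply Polynomial.natDegree_sum_le_of_forall_le
      intro m hm
      refine (Polynomial.natDegree_C_mul_le _ _).trans ?_
      rw [Polynomial.natDegree_X_pow]
      have := hsupdeg m hm
      simp only [he]
      omega
    have heval : ∀ k : Fin 7, P.eval (lam ^ (k : ℕ)) = 0 := by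
      intro k
      have h0 := hcon k
      rw [MvPolynomial.eval_eq'] at h0
      rw [hP, Polynomial.eval_finset_sum]
      rw [← h0]
      apply Finset.sum_congr rfl
      intro m hm
      rw [Polynomial.eval_mul, Polynomial.eval_C, Polynomial.eval_pow, Polynomial.eval_X]
      congr 1
      rw [Fin.prod_univ_two]
      show (lam ^ (k : ℕ)) ^ (e m) = (heptagonVertex k).1 ^ m 0 * (heptagonVertex k).2 ^ m 1
      show (lam ^ (k : ℕ)) ^ (e m) = (lam ^ (2 * (k:ℕ))) ^ m 0 * (lam ^ (3 * (k:ℕ))) ^ m 1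
      rw [← pow_mul, ← pow_mul, ← pow_mul, ← pow_add]
      congr 1
      simp only [he]
      ring
    have hPzero : P = 0 := by
      apply Polynomial.eq_zero_of_natDegree_lt_card_of_eval_eq_zero P
        (f := fun k : Fin 7 => lam ^ (k : ℕ))
      · intro a b hab
        have := hept_pow_eq.mp hab
        unfold Nat.ModEq at this
        have ha := a.isLt
        have hb := b.isLt
        exact Fin.ext (by omega)
      · exact heval
      · simpa using lt_of_le_of_lt hPdeg (by norm_num)
    -- extract a nonzero coefficient of Q
    obtain ⟨m₀, hm₀⟩ := MvPolynomial.support_nonempty.mpr hQ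
    have einj : ∀ m ∈ Q.support, e m = e m₀ → m = m₀ := by
      intro m hm hme
      have h1 := hsupdeg m hm
      have h2 := hsupdeg m₀ hm₀
      simp only [he] at hme
      ext i
      have : m 0 = m₀ 0 ∧ m 1 = m₀ 1 := by omega
      fin_cases i <;> simp [this.1, this.2]
    have hcoeff : P.coeff (e m₀) = Q.coeff m₀ := by
      rw [hP, Polynomial.finset_sum_coeff]
      rw [Finset.sum_eq_single m₀]
      · simp
      · intro m hm hne
        rw [Polynomial.coeff_C_mul, Polynomial.coeff_X_pow]
        rw [if_neg (fun hx => hne (einj m hm hx.symm)), mul_zero]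
      · intro h; exact absurd hm₀ h
    rw [hPzero, Polynomial.coeff_zero] at hcoeff
    exact MvPolynomial.mem_support_iff.mp hm₀ hcoeff.symm
end

section
/- Let D be a properly bounded difference operator of order d supported in [m₋, m₊] (so a_k^{m₋} ≠ 0 and a_k^{m₊} ≠ 0 for all k), and let ξ¹,…,ξᵈ be sequences in the kernel of D. Then the difference Wronskian W_k = det(ξʲ_{k+i-1})_{1≤i,j≤d} satisfies W_{k+1} = (-1)ᵈ · (a_{k-m₋}^{m₋} / a_{k-m₋}^{m₊}) · W_k for all k. -/
/-!
Where the top coefficient `a^{m₊}` does not vanish, the kernel equation at `k - m₋` expresses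
`ξ_{k+d}` as a linear combination of `ξ_k, …, ξ_{k+d-1}`. Hence the matrix of `W_{k+1}` is the
matrix of `W_k` with its first row replaced by that combination, then cyclically rotated to the
bottom. Replacing the row multiplies the determinant by the coefficient `-a^{m₋}/a^{m₊}` of `ξ_k`,
and the rotation contributes its sign `(-1)^{d-1}`.
-/

open Finset Matrix

theorem det_updateRow_zero_sum_submatrix_finRotate {R : Type*} [CommRing R] {n : ℕ}
    (M : Matrix (Fin (n + 1)) (Fin (n + 1)) R) (c : Fin (n + 1) → R) :
    ((M.updateRow 0 (∑ i, c i • M i)).submatrix (finRotate (n + 1)) id).det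
      = (-1) ^ n * c 0 * M.det := by
  rw [det_permute, sign_finRotate, det_updateRow_sum, Nat.add_sub_cancel]
  push_cast
  ring

theorem eq_sum_of_sum_range_succ_eq_zero {K : Type*} [Field K] {n : ℕ} {b x : ℕ → K}
    (h : ∑ i ∈ range (n + 1), b i * x i = 0) (hb : b n ≠ 0) :
    x n = ∑ i : Fin n, -(b i / b n) * x i := by
  rw [Fin.sum_univ_eq_sum_range (fun i => -(b i / b n) * x i)]
  rw [sum_range_succ] at h
  simp only [neg_mul, div_mul_eq_mul_div, sum_neg_distrib, ← sum_div]
  field_simp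
  linear_combination h

def differenceWronskian {R : Type*} [CommRing R] {d : ℕ} (ξ : Fin d → ℤ → R) (k : ℤ) : R :=
  (Matrix.of fun i j : Fin d => ξ j (k + i)).det

theorem differenceWronskian_add_one_of_recurrence {R : Type*} [CommRing R] {n : ℕ}
    (ξ : Fin (n + 1) → ℤ → R) (c : Fin (n + 1) → R) (k : ℤ)
    (hrec : ∀ j, ξ j (k + (n + 1 : ℕ)) = ∑ i : Fin (n + 1), c i * ξ j (k + i)) :
    differenceWronskian ξ (k + 1) = (-1) ^ n * c 0 * differenceWronskian ξ k := by
  rw [differenceWronskian, differenceWronskian, ← det_updateRow_zero_sum_submatrix_finRotate]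
  congr 1
  ext i j
  refine Fin.lastCases ?_ (fun i => ?_) i
  · simp only [of_apply, submatrix_apply, finRotate_last, updateRow_self, id, Finset.sum_apply,
      Pi.smul_apply, smul_eq_mul, ← hrec]
    congr 1
    push_cast
    ring
  · simp only [submatrix_apply, finRotate_apply, Fin.coeSucc_eq_succ, id,
      updateRow_ne (Fin.succ_ne_zero i), of_apply, Fin.val_succ, Fin.val_castSucc]
    congr 1
    push_cast
    ring

theorem wronskian_recurrence_general (d : ℕ) (m : ℤ) (a : ℤ → ℤ → ℝ)
    (hhigh : ∀ k, a k (m + d) ≠ 0)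
    (ξ : Fin d → ℤ → ℝ)
    (hker : ∀ j : Fin d, ∀ k : ℤ,
      ∑ i ∈ Finset.range (d + 1), a k (m + i) * ξ j (k + m + i) = 0)
    (k : ℤ) :
    Matrix.det (Matrix.of fun i j : Fin d => ξ j (k + 1 + i)) =
      (-1) ^ d * (a (k - m) m / a (k - m) (m + d)) *
        Matrix.det (Matrix.of fun i j : Fin d => ξ j (k + i)) := by
  cases d with
  | zero => simp [div_self (by simpa using hhigh (k - m) : a (k - m) m ≠ 0)]
  | succ n =>
    have hrec : ∀ j, ξ j (k + (n + 1 : ℕ)) =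
        ∑ i : Fin (n + 1), -(a (k - m) (m + i) / a (k - m) (m + (n + 1 : ℕ))) * ξ j (k + i) := by
      intro j
      have hj := hker j (k - m)
      simp only [sub_add_cancel] at hj
      exact eq_sum_of_sum_range_succ_eq_zero hj (hhigh (k - m))
    change differenceWronskian ξ (k + 1) = _ * differenceWronskian ξ k
    rw [differenceWronskian_add_one_of_recurrence ξ _ k hrec, Fin.val_zero, Nat.cast_zero,
      add_zero]
    ring

/-- The difference Wronskian of `d` sequences in the kernel of a properly bounded
difference operator of order `d` supported in `[m, m + d]` satisfies
`W_{k+1} = (-1)^d (a_{k-m}^{m} / a_{k-m}^{m+d}) W_k`. -/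
theorem wronskian_recurrence (d : ℕ) (m : ℤ) (a : ℤ → ℤ → ℝ)
    (hlow : ∀ k, a k m ≠ 0) (hhigh : ∀ k, a k (m + d) ≠ 0)
    (ξ : Fin d → ℤ → ℝ)
    (hker : ∀ j : Fin d, ∀ k : ℤ,
      ∑ i ∈ Finset.range (d + 1), a k (m + i) * ξ j (k + m + i) = 0)
    (k : ℤ) :
    Matrix.det (Matrix.of fun i j : Fin d => ξ j (k + 1 + i)) =
      (-1) ^ d * (a (k - m) m / a (k - m) (m + d)) *
        Matrix.det (Matrix.of fun i j : Fin d => ξ j (k + i)) :=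
  wronskian_recurrence_general d m a hhigh ξ hker k
end

section
/- If D is an n-periodic properly bounded difference operator of order d supported in [m₋,m₊], then the determinant of its monodromy M (the restriction of the shift Tⁿ to Ker D) equals (-1)^{nd} · ∏_{k=1}^n (a_k^{m₋} / a_k^{m₊}). -/
/-!
A solution of `D ξ = 0` is determined by any window `(ξ (k + m₋), …, ξ (k + m₊ - 1))` of `d`
consecutive values, and the window at `k + 1` is the companion matrix `C_k` of the recurrence
applied to the window at `k`. Expanding along the first column,
`det C_k = (-1)^d a_k^{m₋} / a_k^{m₊}`. The window at `0` identifies `Ker D` with `ℝ^d`, turning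
the monodromy into `C_{n-1} ⋯ C_0`; periodicity of the coefficients moves the product of the
determinants from `k = 0, …, n - 1` to `k = 1, …, n`. For `d = 0` the kernel is trivial.
-/

open Finset Matrix

theorem Finset.prod_Icc_one_eq_prod_range {M : Type*} [CommMonoid M] {f : ℤ → M} {n : ℕ}
    (h : f n = f 0) : ∏ k ∈ Icc (1 : ℤ) n, f k = ∏ k ∈ range n, f k := by
  rw [Int.Icc_eq_finset_map, prod_map]
  simp only [add_sub_cancel_right, Int.toNat_natCast, Function.Embedding.trans_apply,
    Nat.castEmbedding_apply, addLeftEmbedding_apply]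
  cases n with
  | zero => rfl
  | succ n =>
    rw [prod_range_succ, prod_range_succ', add_comm (1 : ℤ)]
    push_cast at h ⊢
    simp only [add_comm (1 : ℤ), h]

theorem Int.exists_seq_add_one_eq_of_bijective {α : Type*} (f : ℤ → α → α)
    (hf : ∀ k, (f k).Bijective) (x : α) :
    ∃ u : ℤ → α, u 0 = x ∧ ∀ k, u (k + 1) = f k (u k) := by
  let g k := Equiv.ofBijective _ (hf k)
  let u z := Int.inductionOn' (motive := fun _ => α) z 0 x (fun k _ y => f k y)
    (fun k _ y => (g (k - 1)).symm y)
  refine ⟨u, Int.inductionOn'_self, fun k => ?_⟩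
  rcases le_or_gt 0 k with hk | hk
  · exact Int.inductionOn'_add_one hk
  · have hu : u k = (g k).symm (u (k + 1)) := by
      simpa only [add_sub_cancel_right] using Int.inductionOn'_sub_one (motive := fun _ => α)
        (z := k + 1) (b := 0) (zero := x) (succ := fun k _ y => f k y)
        (pred := fun k _ y => (g (k - 1)).symm y) (by omega)
    rw [hu]
    exact ((g k).apply_symm_apply _).symm

noncomputable def diffOp (a : ℤ → ℤ → ℝ) (m : ℤ) (d : ℕ) : (ℤ → ℝ) →ₗ[ℝ] (ℤ → ℝ) where
  toFun ξ k := ∑ i ∈ range (d + 1), a k (m + i) * ξ (k + m + i)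
  map_add' ξ η := by ext k; simp [mul_add, sum_add_distrib]
  map_smul' c ξ := by ext k; simp [mul_sum, mul_left_comm]

def window (m : ℤ) (d : ℕ) (k : ℤ) : (ℤ → ℝ) →ₗ[ℝ] (Fin d → ℝ) :=
  LinearMap.pi fun i => LinearMap.proj (k + m + i)

@[simp]
theorem window_apply (m : ℤ) (d : ℕ) (k : ℤ) (ξ : ℤ → ℝ) (i : Fin d) :
    window m d k ξ i = ξ (k + m + i) := rfl

section Companion

variable (a : ℤ → ℤ → ℝ) (m : ℤ) (d : ℕ)

/-- Rows `i.castSucc` shift a window by one; the last row solves `D ξ = 0` for the new entry. -/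
noncomputable def companion (k : ℤ) : Matrix (Fin (d + 1)) (Fin (d + 1)) ℝ :=
  Matrix.of <| Fin.snoc (fun i : Fin d => Pi.single i.succ 1)
    fun j => -a k (m + j) / a k (m + (d + 1 : ℕ))

variable {a m d}

theorem companion_mulVec_castSucc (k : ℤ) (w : Fin (d + 1) → ℝ) (i : Fin d) :
    (companion a m d k *ᵥ w) i.castSucc = w i.succ := by
  simp [companion, mulVec, Fin.snoc_castSucc, single_dotProduct]

theorem companion_mulVec_last (k : ℤ) (w : Fin (d + 1) → ℝ) :
    (companion a m d k *ᵥ w) (Fin.last d) =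
      -(∑ j : Fin (d + 1), a k (m + (j : ℕ)) * w j) / a k (m + (d + 1 : ℕ)) := by
  simp [companion, mulVec, dotProduct, Fin.snoc_last, sum_div, neg_div, mul_comm, mul_div_assoc]

theorem det_companion (k : ℤ) :
    (companion a m d k).det = (-1) ^ (d + 1) * (a k m / a k (m + (d + 1 : ℕ))) := by
  rw [det_succ_column_zero, sum_eq_single (Fin.last d)]
  · have hminor : (companion a m d k).submatrix Fin.castSucc Fin.succ = 1 := by
      ext i j
      simp [companion, Fin.snoc_castSucc, Pi.single_apply, one_apply, eq_comm]
    rw [Fin.succAbove_last, hminor, det_one]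
    simp [companion, pow_succ, neg_div]
  · intro i _ hi
    obtain ⟨i, rfl⟩ := Fin.exists_castSucc_eq.2 hi
    simp [companion, Fin.snoc_castSucc]
  · simp

theorem isUnit_companion {k : ℤ} (hlow : a k m ≠ 0) (hhigh : a k (m + (d + 1 : ℕ)) ≠ 0) :
    IsUnit (companion a m d k) := by
  rw [isUnit_iff_isUnit_det, det_companion, isUnit_iff_ne_zero]
  exact mul_ne_zero (pow_ne_zero _ (by norm_num)) (div_ne_zero hlow hhigh)

theorem companion_mulVec_window_eq_iff {k : ℤ} (hhigh : a k (m + (d + 1 : ℕ)) ≠ 0)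
    (ξ : ℤ → ℝ) :
    companion a m d k *ᵥ window m (d + 1) k ξ = window m (d + 1) (k + 1) ξ ↔
      diffOp a m (d + 1) ξ k = 0 := by
  rw [funext_iff, Fin.forall_fin_succ', companion_mulVec_last]
  have hshift (i : Fin d) : (companion a m d k *ᵥ window m (d + 1) k ξ) i.castSucc =
      window m (d + 1) (k + 1) ξ i.castSucc := by
    rw [companion_mulVec_castSucc, window_apply, window_apply]
    congr 1
    simp only [Fin.val_succ, Fin.val_castSucc]
    push_cast
    ring
  simp only [hshift, implies_true, true_and, window_apply, diffOp, LinearMap.coe_mk, AddHom.coe_mk]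
  rw [sum_range_succ, ← Fin.sum_univ_eq_sum_range (fun i => a k (m + i) * ξ (k + m + i)),
    div_eq_iff hhigh]
  have hlast : k + 1 + m + (Fin.last d : ℕ) = k + m + (d + 1 : ℕ) := by
    rw [Fin.val_last]; push_cast; ring
  rw [hlast, mul_comm (ξ _), neg_eq_iff_add_eq_zero, add_comm]

end Companion

section Kernel

variable {a : ℤ → ℤ → ℝ} {m : ℤ} {d : ℕ}

theorem window_add_one_eq_companion_mulVec (hhigh : ∀ k, a k (m + (d + 1 : ℕ)) ≠ 0)
    {ξ : ℤ → ℝ} (hξ : ξ ∈ LinearMap.ker (diffOp a m (d + 1))) (k : ℤ) :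
    window m (d + 1) (k + 1) ξ = companion a m d k *ᵥ window m (d + 1) k ξ :=
  ((companion_mulVec_window_eq_iff (hhigh k) ξ).2 (congrFun hξ k)).symm

theorem window_eq_of_add_one_eq_companion_mulVec {u : ℤ → Fin (d + 1) → ℝ}
    (hu : ∀ k, u (k + 1) = companion a m d k *ᵥ u k) (k : ℤ) :
    window m (d + 1) k (fun j => u (j - m) 0) = u k := by
  set ξ : ℤ → ℝ := fun j => u (j - m) 0
  ext i
  induction i using Fin.induction generalizing k with
  | zero => simp [ξ]
  | succ i ih =>
    have hidx : k + m + (i.succ : ℕ) = k + 1 + m + (i.castSucc : ℕ) := by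
      simp only [Fin.val_succ, Fin.val_castSucc]; push_cast; ring
    calc window m (d + 1) k ξ i.succ = window m (d + 1) (k + 1) ξ i.castSucc := by
          rw [window_apply, window_apply, hidx]
      _ = u k i.succ := by rw [ih, hu, companion_mulVec_castSucc]

theorem exists_mem_ker_diffOp_window_zero_eq (hlow : ∀ k, a k m ≠ 0)
    (hhigh : ∀ k, a k (m + (d + 1 : ℕ)) ≠ 0) (w : Fin (d + 1) → ℝ) :
    ∃ ξ ∈ LinearMap.ker (diffOp a m (d + 1)), window m (d + 1) 0 ξ = w := by
  obtain ⟨u, hu0, hu⟩ := Int.exists_seq_add_one_eq_of_bijective (fun k => (companion a m d k *ᵥ ·))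
    (fun k => ⟨mulVec_injective_iff_isUnit.2 (isUnit_companion (hlow k) (hhigh k)),
      mulVec_surjective_iff_isUnit.2 (isUnit_companion (hlow k) (hhigh k))⟩) w
  have hwindow := window_eq_of_add_one_eq_companion_mulVec hu
  refine ⟨_, ?_, (hwindow 0).trans hu0⟩
  ext k
  rw [Pi.zero_apply, ← companion_mulVec_window_eq_iff (hhigh k), hwindow, hwindow, hu]

theorem eq_zero_of_window_zero_eq_zero (hlow : ∀ k, a k m ≠ 0)
    (hhigh : ∀ k, a k (m + (d + 1 : ℕ)) ≠ 0) {ξ : ℤ → ℝ}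
    (hξ : ξ ∈ LinearMap.ker (diffOp a m (d + 1))) (h0 : window m (d + 1) 0 ξ = 0) : ξ = 0 := by
  have hwindow : ∀ k, window m (d + 1) k ξ = 0 := by
    intro k
    induction k using Int.induction_on with
    | zero => exact h0
    | succ k ih => rw [window_add_one_eq_companion_mulVec hhigh hξ, ih, mulVec_zero]
    | pred k ih =>
      apply mulVec_injective_iff_isUnit.2 (isUnit_companion (hlow (-k - 1)) (hhigh (-k - 1)))
      rw [← window_add_one_eq_companion_mulVec hhigh hξ, sub_add_cancel, ih, mulVec_zero]
  ext j
  simpa using congrFun (hwindow (j - m)) 0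

noncomputable def windowEquiv (hlow : ∀ k, a k m ≠ 0) (hhigh : ∀ k, a k (m + (d + 1 : ℕ)) ≠ 0) :
    LinearMap.ker (diffOp a m (d + 1)) ≃ₗ[ℝ] (Fin (d + 1) → ℝ) :=
  LinearEquiv.ofBijective ((window m (d + 1) 0).domRestrict _)
    ⟨fun ξ η h => Subtype.ext <| sub_eq_zero.1 <|
        eq_zero_of_window_zero_eq_zero hlow hhigh (sub_mem ξ.2 η.2)
          (by rw [map_sub]; exact sub_eq_zero.2 h),
      fun w => by
        obtain ⟨ξ, hξ, rfl⟩ := exists_mem_ker_diffOp_window_zero_eq hlow hhigh w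
        exact ⟨⟨ξ, hξ⟩, rfl⟩⟩

variable (a m d) in
noncomputable def transfer : ℕ → Matrix (Fin (d + 1)) (Fin (d + 1)) ℝ
  | 0 => 1
  | k + 1 => companion a m d k * transfer k

theorem det_transfer (n : ℕ) :
    (transfer a m d n).det = ∏ k ∈ range n, (companion a m d k).det := by
  induction n with
  | zero => simp [transfer]
  | succ n ih => rw [transfer, det_mul, ih, prod_range_succ, mul_comm]

theorem window_natCast_eq_transfer_mulVec (hhigh : ∀ k, a k (m + (d + 1 : ℕ)) ≠ 0)
    {ξ : ℤ → ℝ} (hξ : ξ ∈ LinearMap.ker (diffOp a m (d + 1))) (n : ℕ) :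
    window m (d + 1) n ξ = transfer a m d n *ᵥ window m (d + 1) 0 ξ := by
  induction n with
  | zero => simp [transfer]
  | succ n ih =>
    rw [Nat.cast_succ, window_add_one_eq_companion_mulVec hhigh hξ, ih, mulVec_mulVec, transfer]

theorem det_eq_det_transfer (hlow : ∀ k, a k m ≠ 0) (hhigh : ∀ k, a k (m + (d + 1 : ℕ)) ≠ 0)
    (n : ℕ) (M : LinearMap.ker (diffOp a m (d + 1)) →ₗ[ℝ] LinearMap.ker (diffOp a m (d + 1)))
    (hM : ∀ ξ k, (M ξ : ℤ → ℝ) k = (ξ : ℤ → ℝ) (k + n)) :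
    LinearMap.det M = (transfer a m d n).det := by
  set E := windowEquiv hlow hhigh
  have hconj : (E : _ →ₗ[ℝ] _) ∘ₗ M ∘ₗ (E.symm : _ →ₗ[ℝ] _) = toLin' (transfer a m d n) := by
    refine LinearMap.ext fun w => ?_
    obtain ⟨ξ, rfl⟩ := E.surjective w
    have hshift : window m (d + 1) 0 (M ξ) = window m (d + 1) n ξ := by
      ext i
      rw [window_apply, window_apply, hM]
      exact congrArg ξ.1 (by ring)
    simp only [LinearMap.comp_apply, LinearEquiv.coe_coe, LinearEquiv.symm_apply_apply,
      toLin'_apply]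
    exact hshift.trans (window_natCast_eq_transfer_mulVec hhigh ξ.2 n)
  rw [← LinearMap.det_conj M E, hconj, LinearMap.det_toLin']

end Kernel

theorem subsingleton_ker_diffOp_zero {a : ℤ → ℤ → ℝ} {m : ℤ} (hlow : ∀ k, a k m ≠ 0) :
    Subsingleton (LinearMap.ker (diffOp a m 0)) := by
  refine Submodule.subsingleton_iff_eq_bot.2 (eq_bot_iff.2 fun ξ hξ => ?_)
  ext j
  simpa [diffOp, hlow] using congrFun hξ (j - m)

theorem det_monodromy_general (n d : ℕ) (m : ℤ) (a : ℤ → ℤ → ℝ)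
    (hper : ∀ k j : ℤ, a (k + n) j = a k j)
    (hlow : ∀ k, a k m ≠ 0) (hhigh : ∀ k, a k (m + d) ≠ 0)
    (D : (ℤ → ℝ) →ₗ[ℝ] (ℤ → ℝ))
    (hD : ∀ ξ : ℤ → ℝ, ∀ k : ℤ,
      D ξ k = ∑ i ∈ Finset.range (d + 1), a k (m + i) * ξ (k + m + i))
    (M : LinearMap.ker D →ₗ[ℝ] LinearMap.ker D)
    (hM : ∀ ξ : LinearMap.ker D, ∀ k : ℤ, (M ξ : ℤ → ℝ) k = (ξ : ℤ → ℝ) (k + n)) :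
    LinearMap.det M = (-1) ^ (n * d) * ∏ k ∈ Finset.Icc (1 : ℤ) (n : ℤ), (a k m / a k (m + d)) := by
  obtain rfl : D = diffOp a m d := LinearMap.ext fun ξ => funext (hD ξ)
  cases d with
  | zero =>
    have := subsingleton_ker_diffOp_zero hlow
    simp [LinearMap.det_eq_one_of_subsingleton, div_self (hlow _)]
  | succ d =>
    have hperiod : ∀ j, a n j = a 0 j := fun j => by simpa using hper 0 j
    rw [det_eq_det_transfer hlow hhigh n M hM, det_transfer,
      prod_Icc_one_eq_prod_range (by simp only [hperiod])]
    simp only [det_companion, prod_mul_distrib, prod_const, card_range, pow_mul']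

/-- The determinant of the monodromy of an `n`-periodic properly bounded difference
operator of order `d` supported in `[m, m + d]` equals
`(-1)^{nd} ∏_{k=1}^n a_k^{m} / a_k^{m+d}`. -/
theorem det_monodromy (n d : ℕ) (hn : 1 ≤ n) (m : ℤ) (a : ℤ → ℤ → ℝ)
    (hper : ∀ k j : ℤ, a (k + n) j = a k j)
    (hlow : ∀ k, a k m ≠ 0) (hhigh : ∀ k, a k (m + d) ≠ 0)
    (D : (ℤ → ℝ) →ₗ[ℝ] (ℤ → ℝ))
    (hD : ∀ ξ : ℤ → ℝ, ∀ k : ℤ,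
      D ξ k = ∑ i ∈ Finset.range (d + 1), a k (m + i) * ξ (k + m + i))
    (M : LinearMap.ker D →ₗ[ℝ] LinearMap.ker D)
    (hM : ∀ ξ : LinearMap.ker D, ∀ k : ℤ, (M ξ : ℤ → ℝ) k = (ξ : ℤ → ℝ) (k + n)) :
    LinearMap.det M = (-1) ^ (n * d) * ∏ k ∈ Finset.Icc (1 : ℤ) (n : ℤ), (a k m / a k (m + d)) :=
  det_monodromy_general n d m a hper hlow hhigh D hD M hM
end

section
/- Let n ≥ 3 be odd and suppose (x̂_k), (ŷ_k) are n-periodic real sequences with x̂_k < 0, ŷ_k < 0, and x̂_k ŷ_k < 1 for all k. Let L_k be the 3×3 matrix with rows (1,0,1), (1 - x̂_kŷ_k, 0, 1), (0, -ŷ_k, 0), and let M = L₁·…·L_n. Then M has three distinct real eigenvalues. -/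
open Polynomial

/-!
Every product of three or more factors `L_k` is entrywise positive and `det L_k = x̂_k ŷ_k² < 0`,
so for odd `n` the monodromy `M` is a positive `3 × 3` matrix with `det M < 0`.
A positive matrix has a positive eigenvector `v`, with eigenvalue `r > 0`: maximise the
Collatz–Wielandt bound over the simplex. Row `i` of `M v = r v` gives `(r - M_ii) v_i > M_ij v_j`
for `j ≠ i`, so each principal `2 × 2` minor of `r - M` is positive; these minors add up to `χ'(r)`,
where `χ` is the characteristic polynomial, so `r` is a simple root of `χ`. The quadratic
`q = χ / (X - r)` has `q(0) = det M / r < 0`, hence two real roots of opposite signs, and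
`q(r) = χ'(r) > 0` tells them apart from `r`.
-/

namespace Polynomial

theorem exists_eq_X_sub_C_mul_X_sub_C_of_eval_neg {q : ℝ[X]} (hq : q.Monic)
    (hdeg : q.natDegree = 2) {a : ℝ} (ha : q.eval a < 0) :
    ∃ z₁ z₂ : ℝ, z₁ ≠ z₂ ∧ q = (X - C z₁) * (X - C z₂) := by
  set b := q.coeff 1
  set c := q.coeff 0
  have hq' : q = X ^ 2 + C b * X + C c := by
    rw [hq.as_sum, hdeg]
    simp only [Finset.sum_range_succ, Finset.range_one, Finset.sum_singleton, pow_zero, mul_one,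
      pow_one, b, c]
    ring
  rw [hq'] at ha
  simp only [eval_add, eval_pow, eval_mul, eval_C, eval_X] at ha
  set s := √(b ^ 2 - 4 * c)
  have hs : s ^ 2 = b ^ 2 - 4 * c := Real.sq_sqrt (by nlinarith [sq_nonneg (2 * a + b)])
  have hs₀ : 0 < s := Real.sqrt_pos.2 (by nlinarith [sq_nonneg (2 * a + b)])
  obtain ⟨z₁, hz₁⟩ : ∃ z, z = (-b - s) / 2 := ⟨_, rfl⟩
  obtain ⟨z₂, hz₂⟩ : ∃ z, z = (-b + s) / 2 := ⟨_, rfl⟩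
  have hb : C b = -(C z₁ + C z₂) := by rw [← C_add, ← C_neg, hz₁, hz₂]; congr 1; ring
  have hc : C c = C z₁ * C z₂ := by rw [← C_mul, hz₁, hz₂]; congr 1; nlinarith
  refine ⟨z₁, z₂, by rw [hz₁, hz₂]; intro h; linarith, ?_⟩
  rw [hq', hb, hc]
  ring

end Polynomial

namespace Matrix

variable {ι : Type*} [Fintype ι]

theorem mulVec_pos_of_pos {A : Matrix ι ι ℝ} (hA : ∀ i j, 0 < A i j) {u : ι → ℝ}
    (hu : 0 ≤ u) (hu₀ : u ≠ 0) (i : ι) : 0 < (A *ᵥ u) i := by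
  obtain ⟨j, hj⟩ := Function.ne_iff.1 hu₀
  exact Finset.sum_pos' (fun k _ => mul_nonneg (hA i k).le (hu k))
    ⟨j, Finset.mem_univ j, mul_pos (hA i j) ((hu j).lt_of_ne' hj)⟩

theorem mulVec_pos_of_mem_stdSimplex {A : Matrix ι ι ℝ} (hA : ∀ i j, 0 < A i j) {u : ι → ℝ}
    (hu : u ∈ stdSimplex ℝ ι) (i : ι) : 0 < (A *ᵥ u) i :=
  mulVec_pos_of_pos hA hu.1 (by rintro rfl; simpa using hu.2) i

theorem le_sum_sum_of_smul_le_mulVec {A : Matrix ι ι ℝ} (hA : ∀ i j, 0 ≤ A i j) {t : ℝ}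
    {u : ι → ℝ} (hu : u ∈ stdSimplex ℝ ι) (htu : t • u ≤ A *ᵥ u) : t ≤ ∑ i, ∑ j, A i j := by
  calc t = ∑ i, t * u i := by rw [← Finset.mul_sum, hu.2, mul_one]
    _ ≤ ∑ i, ∑ j, A i j * u j := Finset.sum_le_sum fun i _ => htu i
    _ ≤ ∑ i, ∑ j, A i j := by
      gcongr with i _ j _
      exact mul_le_of_le_one_right (hA i j) (mem_Icc_of_mem_stdSimplex hu j).2

theorem exists_gt_smul_le_mulVec {A : Matrix ι ι ℝ} (hA : ∀ i j, 0 < A i j) {r : ℝ}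
    {u : ι → ℝ} (hu : u ∈ stdSimplex ℝ ι) (hru : r • u ≤ A *ᵥ u) (hne : A *ᵥ u ≠ r • u) :
    ∃ t > r, ∃ u' ∈ stdSimplex ℝ ι, t • u' ≤ A *ᵥ u' := by
  set w := A *ᵥ u
  have hw : ∀ i, 0 < w i := mulVec_pos_of_mem_stdSimplex hA hu
  have hstrict : ∀ i, r * w i < (A *ᵥ w) i := by
    intro i
    have := mulVec_pos_of_pos hA (sub_nonneg.2 hru) (sub_ne_zero.2 hne) i
    rwa [mulVec_sub, mulVec_smul, Pi.sub_apply, sub_pos] at this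
  obtain ⟨t, hrt, ht⟩ : ∃ t > r, ∀ i, t * w i < (A *ᵥ w) i :=
    (Filter.eventually_all.2 fun i => (continuousAt_id.mul continuousAt_const).eventually_lt
      continuousAt_const (hstrict i)).exists_gt
  obtain ⟨i₀, -⟩ := Function.ne_iff.1 hne
  have hsum : 0 < ∑ i, w i := Finset.sum_pos (fun i _ => hw i) ⟨i₀, Finset.mem_univ _⟩
  refine ⟨t, hrt, (∑ i, w i)⁻¹ • w, ⟨fun i => ?_, ?_⟩, fun i => ?_⟩
  · exact mul_nonneg (inv_nonneg.2 hsum.le) (hw i).le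
  · simp [← Finset.mul_sum, hsum.ne']
  · simp only [mulVec_smul, Pi.smul_apply, smul_eq_mul]
    nlinarith [ht i, inv_pos.2 hsum]

theorem exists_pos_eigenvector_of_pos [Nonempty ι] {A : Matrix ι ι ℝ} (hA : ∀ i j, 0 < A i j) :
    ∃ (r : ℝ) (v : ι → ℝ), (∀ i, 0 < v i) ∧ A *ᵥ v = r • v := by
  classical
  set P : Set (ℝ × (ι → ℝ)) := {p | p.2 ∈ stdSimplex ℝ ι ∧ 0 ≤ p.1 ∧ p.1 • p.2 ≤ A *ᵥ p.2}
  have hP : IsCompact P := by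
    refine (isCompact_Icc.prod (isCompact_stdSimplex ℝ ι)).of_isClosed_subset ?_
      fun p hp => ⟨⟨hp.2.1, le_sum_sum_of_smul_le_mulVec (fun i j => (hA i j).le) hp.1 hp.2.2⟩, hp.1⟩
    exact (isClosed_stdSimplex ℝ ι).preimage continuous_snd |>.inter <|
      (isClosed_le continuous_const continuous_fst).inter <|
        isClosed_le (continuous_fst.smul continuous_snd) (continuous_const.matrix_mulVec continuous_snd)
  have he : Pi.single (Classical.arbitrary ι) 1 ∈ stdSimplex ℝ ι := single_mem_stdSimplex ℝ _
  obtain ⟨⟨r, u⟩, ⟨hu, hr, hru⟩, hmax⟩ := hP.exists_isMaxOn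
    ⟨(0, _), he, le_rfl, by
      rw [zero_smul]; exact fun i => (mulVec_pos_of_mem_stdSimplex hA he i).le⟩
    continuous_fst.continuousOn
  have heig : A *ᵥ u = r • u := by
    by_contra hne
    obtain ⟨t, hrt, u', hu', htu'⟩ := exists_gt_smul_le_mulVec hA hu hru hne
    exact (isMaxOn_iff.1 hmax (t, u') ⟨hu', hr.trans hrt.le, htu'⟩).not_gt hrt
  refine ⟨r, A *ᵥ u, mulVec_pos_of_mem_stdSimplex hA hu, ?_⟩
  rw [heig, mulVec_smul, heig]

theorem pos_of_mulVec_eq_smul [Nonempty ι] {A : Matrix ι ι ℝ} (hA : ∀ i j, 0 < A i j) {r : ℝ}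
    {v : ι → ℝ} (hv : ∀ i, 0 < v i) (hAv : A *ᵥ v = r • v) : 0 < r := by
  set i := Classical.arbitrary ι
  have hAvi : 0 < (A *ᵥ v) i :=
    mulVec_pos_of_pos hA (fun j => (hv j).le) (fun h => (hv i).ne' (congrFun h i)) i
  rw [hAv, Pi.smul_apply, smul_eq_mul] at hAvi
  exact pos_of_mul_pos_left hAvi (hv i).le

theorem mul_lt_sub_mul_of_mulVec_eq_smul {A : Matrix ι ι ℝ} (hA : ∀ i j, 0 < A i j) {r : ℝ}
    {v : ι → ℝ} (hv : ∀ i, 0 < v i) (hAv : A *ᵥ v = r • v) {i j k : ι} (hij : i ≠ j)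
    (hik : i ≠ k) (hjk : j ≠ k) : A i j * v j < (r - A i i) * v i := by
  classical
  have hsum : ∑ l ∈ {i, j, k}, A i l * v l ≤ r * v i := by
    rw [← smul_eq_mul, ← Pi.smul_apply, ← hAv]
    exact Finset.sum_le_sum_of_subset_of_nonneg (Finset.subset_univ _)
      fun l _ _ => (mul_pos (hA i l) (hv l)).le
  rw [Finset.sum_insert (by simp [hij, hik]), Finset.sum_pair hjk] at hsum
  nlinarith [mul_pos (hA i k) (hv k)]

theorem mul_lt_sub_mul_sub_of_mulVec_eq_smul {A : Matrix ι ι ℝ} (hA : ∀ i j, 0 < A i j)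
    {r : ℝ} {v : ι → ℝ} (hv : ∀ i, 0 < v i) (hAv : A *ᵥ v = r • v) {i j k : ι} (hij : i ≠ j)
    (hik : i ≠ k) (hjk : j ≠ k) : A i j * A j i < (r - A i i) * (r - A j j) := by
  have h₁ := mul_lt_sub_mul_of_mulVec_eq_smul hA hv hAv hij hik hjk
  have h₂ := mul_lt_sub_mul_of_mulVec_eq_smul hA hv hAv hij.symm hjk hik
  have := mul_lt_mul'' h₁ h₂ (mul_pos (hA i j) (hv j)).le (mul_pos (hA j i) (hv i)).le
  nlinarith [mul_pos (hv i) (hv j)]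

section

variable [DecidableEq ι]

def nonnegWithoutZeroCol : Submonoid (Matrix ι ι ℝ) where
  carrier := {B | (∀ i j, 0 ≤ B i j) ∧ ∀ j, ∃ i, 0 < B i j}
  one_mem' := ⟨fun i j => by by_cases h : i = j <;> simp [one_apply, h], fun j => ⟨j, by simp⟩⟩
  mul_mem' := by
    rintro B C ⟨hB, hB'⟩ ⟨hC, hC'⟩
    refine ⟨fun i j => Finset.sum_nonneg fun k _ => mul_nonneg (hB i k) (hC k j), fun j => ?_⟩
    obtain ⟨k, hk⟩ := hC' j
    obtain ⟨i, hi⟩ := hB' k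
    exact ⟨i, Finset.sum_pos' (fun l _ => mul_nonneg (hB i l) (hC l j))
      ⟨k, Finset.mem_univ k, mul_pos hi hk⟩⟩

theorem mul_pos_of_pos_of_mem_nonnegWithoutZeroCol {A B : Matrix ι ι ℝ}
    (hA : ∀ i j, 0 < A i j) (hB : B ∈ nonnegWithoutZeroCol) (i j : ι) : 0 < (A * B) i j := by
  obtain ⟨k, hk⟩ := hB.2 j
  exact mulVec_pos_of_pos hA (fun k => hB.1 k j) (fun h => hk.ne' (congrFun h k)) i

end

theorem isRoot_charpoly_of_mulVec_eq_smul {K : Type*} [Field K] [DecidableEq ι]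
    {A : Matrix ι ι K} {r : K} {v : ι → K} (hv : v ≠ 0) (hAv : A *ᵥ v = r • v) :
    A.charpoly.IsRoot r := by
  rw [IsRoot, eval_charpoly, ← exists_mulVec_eq_zero_iff]
  exact ⟨v, hv, by ext; simp [sub_mulVec, hAv]⟩

theorem eval_derivative_charpoly_fin_three {R : Type*} [CommRing R]
    (A : Matrix (Fin 3) (Fin 3) R) (t : R) :
    A.charpoly.derivative.eval t = ((t - A 0 0) * (t - A 1 1) - A 0 1 * A 1 0) +
      ((t - A 0 0) * (t - A 2 2) - A 0 2 * A 2 0) +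
      ((t - A 1 1) * (t - A 2 2) - A 1 2 * A 2 1) := by
  simp only [charpoly, det_fin_three, charmatrix_apply_eq, charmatrix_apply_ne, ne_eq,
    Fin.reduceEq, not_false_eq_true, derivative_sub, derivative_add, derivative_mul,
    derivative_neg, derivative_X, derivative_C, eval_sub, eval_add, eval_mul, eval_neg, eval_X,
    eval_C, eval_zero, eval_one]
  ring

theorem eval_derivative_charpoly_pos_of_pos {A : Matrix (Fin 3) (Fin 3) ℝ}
    (hA : ∀ i j, 0 < A i j) {r : ℝ} {v : Fin 3 → ℝ} (hv : ∀ i, 0 < v i)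
    (hAv : A *ᵥ v = r • v) : 0 < A.charpoly.derivative.eval r := by
  rw [eval_derivative_charpoly_fin_three]
  linarith [mul_lt_sub_mul_sub_of_mulVec_eq_smul hA hv hAv (i := 0) (j := 1) (k := 2)
      (by decide) (by decide) (by decide),
    mul_lt_sub_mul_sub_of_mulVec_eq_smul hA hv hAv (i := 0) (j := 2) (k := 1)
      (by decide) (by decide) (by decide),
    mul_lt_sub_mul_sub_of_mulVec_eq_smul hA hv hAv (i := 1) (j := 2) (k := 0)
      (by decide) (by decide) (by decide)]

theorem exists_charpoly_eq_of_pos_of_det_neg {A : Matrix (Fin 3) (Fin 3) ℝ}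
    (hA : ∀ i j, 0 < A i j) (hdet : A.det < 0) :
    ∃ z₁ z₂ z₃ : ℝ, z₁ ≠ z₂ ∧ z₁ ≠ z₃ ∧ z₂ ≠ z₃ ∧
      A.charpoly = (X - C z₁) * (X - C z₂) * (X - C z₃) := by
  obtain ⟨r, v, hv, hAv⟩ := exists_pos_eigenvector_of_pos hA
  set q := A.charpoly /ₘ (X - C r)
  have hfac : (X - C r) * q = A.charpoly := mul_divByMonic_eq_iff_isRoot.2 <|
    isRoot_charpoly_of_mulVec_eq_smul (fun h => (hv 0).ne' (congrFun h 0)) hAv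
  have hq : q.Monic := (monic_X_sub_C r).of_mul_monic_left (hfac ▸ A.charpoly_monic)
  have hdeg : q.natDegree = 2 := by
    rw [natDegree_divByMonic _ (monic_X_sub_C r), charpoly_natDegree_eq_dim, natDegree_X_sub_C]
    rfl
  have hq₀ : q.eval 0 < 0 := by
    have h := congrArg (eval 0) hfac
    have hcoeff := A.det_eq_sign_charpoly_coeff
    rw [← coeff_zero_eq_eval_zero A.charpoly, eval_mul] at h
    simp only [eval_sub, eval_X, eval_C, zero_sub, neg_mul, Fintype.card_fin] at h hcoeff
    nlinarith [pos_of_mulVec_eq_smul hA hv hAv]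
  have hqr : 0 < q.eval r := by
    have h := congrArg (fun p => p.derivative.eval r) hfac
    simp only [derivative_mul, derivative_sub, derivative_X, derivative_C, sub_zero, one_mul,
      eval_add, eval_mul, eval_sub, eval_X, eval_C, sub_self, zero_mul, add_zero] at h
    exact h ▸ eval_derivative_charpoly_pos_of_pos hA hv hAv
  obtain ⟨z₂, z₃, h₂₃, hqz⟩ := exists_eq_X_sub_C_mul_X_sub_C_of_eval_neg hq hdeg hq₀
  have hne : ∀ z, q.eval z = 0 → r ≠ z := by rintro z hz rfl; exact hqr.ne' hz
  exact ⟨r, z₂, z₃, hne _ (by simp [hqz]), hne _ (by simp [hqz]), h₂₃,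
    by rw [← hfac, hqz, mul_assoc]⟩

end Matrix

open Matrix

/-- `L_k` is `monodromyFactor (1 - x̂_k ŷ_k) (-ŷ_k)`. -/
def monodromyFactor (p q : ℝ) : Matrix (Fin 3) (Fin 3) ℝ := !![1, 0, 1; p, 0, 1; 0, q, 0]

theorem det_monodromyFactor (p q : ℝ) : (monodromyFactor p q).det = q * (p - 1) := by
  simp only [monodromyFactor, det_fin_three, of_apply, cons_val', cons_val_zero,
    cons_val_fin_one, cons_val_one, mul_zero, cons_val, mul_one, one_mul, zero_sub, zero_mul,
    sub_zero, add_zero]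
  ring

theorem monodromyFactor_mem_nonnegWithoutZeroCol {p q : ℝ} (hp : 0 ≤ p) (hq : 0 < q) :
    monodromyFactor p q ∈ nonnegWithoutZeroCol := by
  refine ⟨fun i j => ?_, fun j => ?_⟩
  · fin_cases i <;> fin_cases j <;> simp [monodromyFactor, hp, hq.le]
  · fin_cases j
    exacts [⟨0, by simp [monodromyFactor]⟩, ⟨2, by simp [monodromyFactor, hq]⟩,
      ⟨0, by simp [monodromyFactor]⟩]

theorem monodromyFactor_mul_mul_pos {p₁ q₁ p₂ q₂ p₃ q₃ : ℝ} (hp₁ : 0 < p₁) (hq₁ : 0 < q₁)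
    (hp₂ : 0 < p₂) (hq₂ : 0 ≤ q₂) (hp₃ : 0 ≤ p₃) (hq₃ : 0 < q₃) (i j : Fin 3) :
    0 < (monodromyFactor p₁ q₁ * monodromyFactor p₂ q₂ * monodromyFactor p₃ q₃) i j := by
  fin_cases i <;> fin_cases j <;>
    simp [monodromyFactor, Matrix.mul_apply, Fin.sum_univ_three] <;> positivity

theorem prod_monodromyFactor_pos {n : ℕ} (hn : 3 ≤ n) {p q : ℕ → ℝ} (hp : ∀ k, 0 < p k)
    (hq : ∀ k, 0 < q k) (i j : Fin 3) :
    0 < ((List.range n).map fun k => monodromyFactor (p k) (q k)).prod i j := by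
  obtain ⟨m, rfl⟩ := Nat.exists_eq_add_of_le hn
  rw [List.range_add, List.map_append, List.prod_append]
  refine mul_pos_of_pos_of_mem_nonnegWithoutZeroCol (fun i j => ?_)
    (Submonoid.list_prod_mem _ ?_) i j
  · simpa [List.range_succ, Matrix.mul_assoc] using
      monodromyFactor_mul_mul_pos (hp 0) (hq 0) (hp 1) (hq 1).le (hp 2).le (hq 2) i j
  · simp only [List.mem_map]
    rintro _ ⟨_, ⟨k, -, rfl⟩, rfl⟩
    exact monodromyFactor_mem_nonnegWithoutZeroCol (hp _).le (hq _)

theorem det_prod_monodromyFactor_neg {n : ℕ} (hn : Odd n) {p q : ℕ → ℝ} (hp : ∀ k, p k < 1)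
    (hq : ∀ k, 0 < q k) :
    (((List.range n).map fun k => monodromyFactor (p k) (q k)).prod).det < 0 := by
  rw [← coe_detMonoidHom, map_list_prod, List.map_map]
  set l := (List.range n).map (detMonoidHom ∘ fun k => monodromyFactor (p k) (q k))
  have hl : 0 < (l.map Neg.neg).prod := List.prod_pos <| by
    simp only [l, List.map_map, List.mem_map]
    rintro _ ⟨k, -, rfl⟩
    simp only [Function.comp_apply, coe_detMonoidHom, det_monodromyFactor, Left.neg_pos_iff]
    exact mul_neg_of_pos_of_neg (hq k) (sub_neg.2 (hp k))
  rwa [List.prod_map_neg, (by simpa [l] using hn : Odd l.length).neg_one_pow, neg_one_mul,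
    neg_pos] at hl

theorem monodromy_three_distinct_real_eigenvalues_general (n : ℕ) (hn : 3 ≤ n) (hodd : Odd n)
    (x y : ℤ → ℝ)
    (hx : ∀ k, x k < 0) (hy : ∀ k, y k < 0) (hxy : ∀ k, x k * y k < 1) :
    ∃ z₁ z₂ z₃ : ℝ, z₁ ≠ z₂ ∧ z₁ ≠ z₃ ∧ z₂ ≠ z₃ ∧
      Matrix.charpoly
        (((List.range n).map (fun k : ℕ =>
          !![(1 : ℝ), 0, 1;
             1 - x ((k : ℤ) + 1) * y ((k : ℤ) + 1), 0, 1;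
             0, -(y ((k : ℤ) + 1)), 0])).prod) =
        (X - C z₁) * (X - C z₂) * (X - C z₃) := by
  set p : ℕ → ℝ := fun k => 1 - x (k + 1) * y (k + 1)
  set q : ℕ → ℝ := fun k => -y (k + 1)
  have hp : ∀ k, 0 < p k := fun k => sub_pos.2 (hxy _)
  have hp₁ : ∀ k, p k < 1 := fun k => sub_lt_self _ (mul_pos_of_neg_of_neg (hx _) (hy _))
  have hq : ∀ k, 0 < q k := fun k => neg_pos.2 (hy _)
  exact exists_charpoly_eq_of_pos_of_det_neg (prod_monodromyFactor_pos hn hp hq)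
    (det_prod_monodromyFactor_neg hodd hp₁ hq)

/-- If `x̂_k < 0`, `ŷ_k < 0` and `x̂_k ŷ_k < 1` (n-periodic, n ≥ 3 odd), then the product
`M = L₁ ⋯ L_n` of the matrices `L_k = [[1,0,1],[1 - x̂_kŷ_k,0,1],[0,-ŷ_k,0]]` has three
distinct real eigenvalues. -/
theorem monodromy_three_distinct_real_eigenvalues (n : ℕ) (hn : 3 ≤ n) (hodd : Odd n)
    (x y : ℤ → ℝ)
    (hpx : ∀ k, x (k + n) = x k) (hpy : ∀ k, y (k + n) = y k)
    (hx : ∀ k, x k < 0) (hy : ∀ k, y k < 0) (hxy : ∀ k, x k * y k < 1) :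
    ∃ z₁ z₂ z₃ : ℝ, z₁ ≠ z₂ ∧ z₁ ≠ z₃ ∧ z₂ ≠ z₃ ∧
      Matrix.charpoly
        (((List.range n).map (fun k : ℕ =>
          !![(1 : ℝ), 0, 1;
             1 - x ((k : ℤ) + 1) * y ((k : ℤ) + 1), 0, 1;
             0, -(y ((k : ℤ) + 1)), 0])).prod) =
        (X - C z₁) * (X - C z₂) * (X - C z₃) :=
  monodromy_three_distinct_real_eigenvalues_general n hn hodd x y hx hy hxy
end

section
/- Let r ∈ ℂ* with r ≠ ±1. Then the points v_k = (r^k, r^{-k}) ∈ ℂ² (k ∈ ℤ, affine coordinates x₁ = r^k, x₂ = r^{-k} with x₃ = 1) all lie on the conic x₁x₂ = 1, and the line through v_k and v_{k+1} is tangent to the conic x₁x₂ = (1/2 + (r + r⁻¹)/4) at a single point; hence the polygon with vertices v_k is simultaneously inscribed in one conic and circumscribed about another. -/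
/-- The points `v_k = (r^k, r^{-k})` lie on the conic `x₁x₂ = 1`, and the chord joining
`v_k` and `v_{k+1}` meets the conic `x₁x₂ = 1/2 + (r + r⁻¹)/4` in exactly one point:
the polygon is inscribed in one conic and circumscribed about another. -/
theorem degenerate_poncelet_polygon (r : ℂ) (hr0 : r ≠ 0) (hr1 : r ≠ 1) (hrm1 : r ≠ -1)
    (k : ℤ) :
    r ^ k * r ^ (-k) = 1 ∧
    ∃! t : ℂ,
      ((1 - t) * r ^ k + t * r ^ (k + 1)) * ((1 - t) * r ^ (-k) + t * r ^ (-(k + 1))) =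
        1 / 2 + (r + r⁻¹) / 4 := by
  have h1 : r ^ k * r ^ (-k) = 1 := by
    rw [← zpow_add₀ hr0]; simp
  have hrr : r * r⁻¹ = 1 := mul_inv_cancel₀ hr0
  have hk1 : r ^ (k + 1) = r ^ k * r := by
    rw [zpow_add₀ hr0]; simp
  have hk2 : r ^ (-(k + 1)) = r ^ (-k) * r⁻¹ := by
    rw [neg_add, zpow_add₀ hr0]; simp
  have hs : 2 - (r + r⁻¹) ≠ 0 := by
    intro h
    apply hr1
    have : r * (2 - (r + r⁻¹)) = 0 := by rw [h]; ring
    have : -(r - 1) ^ 2 = 0 := by linear_combination this + hrr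
    have := pow_eq_zero_iff (n := 2) (by norm_num) |>.mp (neg_eq_zero.mp this)
    exact sub_eq_zero.mp this
  have key : ∀ t : ℂ,
      (((1 - t) * r ^ k + t * r ^ (k + 1)) * ((1 - t) * r ^ (-k) + t * r ^ (-(k + 1))) =
        1 / 2 + (r + r⁻¹) / 4) ↔ (2 - (r + r⁻¹)) * (t - 1/2) ^ 2 = 0 := by
    intro t
    rw [hk1, hk2]
    constructor
    · intro h
      linear_combination h - ((1 - t) + t * r) * ((1 - t) + t * r⁻¹) * h1
        + ((1 - t) + t * r) * ((1 - t) + t * r⁻¹) - t ^ 2 * hrr + t ^ 2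
    · intro h
      linear_combination h + ((1 - t) + t * r) * ((1 - t) + t * r⁻¹) * h1
        - ((1 - t) + t * r) * ((1 - t) + t * r⁻¹) + t ^ 2 * hrr - t ^ 2
  refine ⟨h1, 1/2, ?_, ?_⟩
  · exact (key _).mpr (by ring)
  · intro t ht
    rw [key] at ht
    rcases mul_eq_zero.mp ht with h | h
    · exact absurd h hs
    · have := pow_eq_zero_iff (n := 2) (by norm_num) |>.mp h
      exact sub_eq_zero.mp this
end
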